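/- arXiv:1610.00903 — 3 statements merged into one kernel-verified Lean document; each statement's English description precedes it below -/
import Mathlib

section
/- Let b(n) denote the number of hyperbinary expansions of n, with b(0)=1. Then b(1)=1, b(2n+1)=b(n), and b(2n)=b(n)+b(n-1) for all n ≥ 1. -/
/-!
Removing the last digit `d` of a nonempty expansion of `m` leaves an expansion of `(m - d) / 2`,
and `d ≡ m (mod 2)`. Hence the expansions of `2n + 1` are those of `n` followed by `1`, and those
of `2n` are those of `n` followed by `0` together with those of `n - 1` followed by `2`; for
`n ≥ 1` the appended `0` never becomes a leading zero.
-/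

/-- The integer represented by a word of digits (most significant first). -/
def hval (w : List ℕ) : ℕ := w.foldl (fun a d => 2 * a + d) 0

/-- `w` is a hyperbinary expansion of `n`: digits in {0,1,2}, nonzero leading
digit, representing `n`.  (The empty word is the unique expansion of `0`.) -/
def IsHyp (n : ℕ) (w : List ℕ) : Prop :=
  (∀ d ∈ w, d ≤ 2) ∧ w.head? ≠ some 0 ∧ hval w = n

/-- `b n`: the number of hyperbinary expansions of `n` (so `b 0 = 1`). -/
noncomputable def hb (n : ℕ) : ℕ := Set.ncard {w : List ℕ | IsHyp n w}

/-- A single rewriting step: `02 → 10` or `12 → 20`, a leading `2` treated as `02`. -/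
def Step (u v : List ℕ) : Prop :=
  (∃ x y : List ℕ, u = x ++ [0, 2] ++ y ∧ v = x ++ [1, 0] ++ y) ∨
  (∃ x y : List ℕ, u = x ++ [1, 2] ++ y ∧ v = x ++ [2, 0] ++ y) ∨
  (∃ y : List ℕ, u = 2 :: y ∧ v = 1 :: 0 :: y)

/-- Strict shortlex order: first by length, then lexicographically. -/
def Shortlex (u v : List ℕ) : Prop :=
  u.length < v.length ∨ (u.length = v.length ∧ List.Lex (· < ·) u v)

/-- Number of maximal blocks of consecutive `2`'s in a word. -/
def blocks2 : List ℕ → ℕ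
  | [] => 0
  | d :: rest => blocks2 rest + (if d = 2 ∧ rest.head? ≠ some 2 then 1 else 0)

lemma hval_append_singleton (w : List ℕ) (d : ℕ) : hval (w ++ [d]) = 2 * hval w + d := by
  simp [hval]

lemma isHyp_nil_iff {n : ℕ} : IsHyp n [] ↔ n = 0 := by
  simp [IsHyp, hval, eq_comm]

lemma isHyp_append_singleton_iff {n d : ℕ} {u : List ℕ} :
    IsHyp n (u ++ [d]) ↔ ∃ k, IsHyp k u ∧ d ≤ 2 ∧ (u = [] → d ≠ 0) ∧ 2 * k + d = n := by
  simp only [IsHyp, hval_append_singleton, List.forall_mem_append, List.forall_mem_singleton,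
    List.head?_append]
  cases u <;> simp [hval]
  tauto

lemma append_singleton_mem_image_iff {α : Type*} {s : Set (List α)} {u : List α} {d e : α} :
    u ++ [d] ∈ (· ++ [e]) '' s ↔ u ∈ s ∧ d = e := by
  simp [eq_comm]

lemma not_isHyp_zero_append_singleton (u : List ℕ) (d : ℕ) : ¬IsHyp 0 (u ++ [d]) := by
  induction u using List.reverseRecOn generalizing d with
  | nil =>
    rw [isHyp_append_singleton_iff]
    rintro ⟨k, -, -, hne, hsum⟩
    exact hne rfl (by omega)
  | append_singleton v e ih =>
    rw [isHyp_append_singleton_iff]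
    rintro ⟨k, hu, -, -, hsum⟩
    exact ih e (by rwa [show k = 0 by omega] at hu)

lemma setOf_isHyp_zero : {w | IsHyp 0 w} = {[]} := by
  ext w
  rcases List.eq_nil_or_concat' w with rfl | ⟨u, d, rfl⟩
  · simp [isHyp_nil_iff]
  · simpa using not_isHyp_zero_append_singleton u d

lemma setOf_isHyp_two_mul_add_one (n : ℕ) :
    {w | IsHyp (2 * n + 1) w} = (· ++ [1]) '' {w | IsHyp n w} := by
  ext w
  rcases List.eq_nil_or_concat' w with rfl | ⟨u, d, rfl⟩
  · simp [isHyp_nil_iff]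
  rw [Set.mem_ofPred, append_singleton_mem_image_iff, Set.mem_ofPred, isHyp_append_singleton_iff]
  constructor
  · rintro ⟨k, hu, hd, -, hsum⟩
    obtain ⟨rfl, rfl⟩ : k = n ∧ d = 1 := by omega
    exact ⟨hu, rfl⟩
  · rintro ⟨hu, rfl⟩
    exact ⟨n, hu, one_le_two, fun _ => one_ne_zero, rfl⟩

lemma setOf_isHyp_two_mul {n : ℕ} (hn : n ≠ 0) :
    {w | IsHyp (2 * n) w} =
      (· ++ [0]) '' {w | IsHyp n w} ∪ (· ++ [2]) '' {w | IsHyp (n - 1) w} := by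
  ext w
  rcases List.eq_nil_or_concat' w with rfl | ⟨u, d, rfl⟩
  · simp [isHyp_nil_iff, hn]
  rw [Set.mem_union, Set.mem_ofPred, append_singleton_mem_image_iff,
    append_singleton_mem_image_iff, Set.mem_ofPred, Set.mem_ofPred, isHyp_append_singleton_iff]
  constructor
  · rintro ⟨k, hu, hd, -, hsum⟩
    obtain ⟨rfl, rfl⟩ | ⟨rfl, rfl⟩ : k = n ∧ d = 0 ∨ k = n - 1 ∧ d = 2 := by omega
    exacts [Or.inl ⟨hu, rfl⟩, Or.inr ⟨hu, rfl⟩]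
  · rintro (⟨hu, rfl⟩ | ⟨hu, rfl⟩)
    · exact ⟨n, hu, zero_le_two, fun h => absurd (isHyp_nil_iff.1 (h ▸ hu)) hn, rfl⟩
    · exact ⟨n - 1, hu, le_rfl, fun _ => two_ne_zero, by omega⟩

lemma finite_setOf_isHyp (n : ℕ) : {w | IsHyp n w}.Finite := by
  induction n using Nat.strong_induction_on with
  | _ n ih =>
  obtain ⟨k, rfl | rfl⟩ := Nat.even_or_odd' n
  · rcases eq_or_ne k 0 with rfl | hk
    · simp [setOf_isHyp_zero]
    · rw [setOf_isHyp_two_mul hk]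
      exact ((ih k (by omega)).image _).union ((ih (k - 1) (by omega)).image _)
  · rw [setOf_isHyp_two_mul_add_one]
    exact (ih k (by omega)).image _

lemma hb_zero : hb 0 = 1 := by
  rw [hb, setOf_isHyp_zero, Set.ncard_singleton]

lemma hb_two_mul_add_one (n : ℕ) : hb (2 * n + 1) = hb n := by
  rw [hb, hb, setOf_isHyp_two_mul_add_one,
    Set.ncard_image_of_injective _ (List.append_left_injective _)]

lemma hb_two_mul {n : ℕ} (hn : n ≠ 0) : hb (2 * n) = hb n + hb (n - 1) := by
  have hdisj :
      Disjoint ((· ++ [0]) '' {w | IsHyp n w}) ((· ++ [2]) '' {w | IsHyp (n - 1) w}) := by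
    rw [Set.disjoint_left]
    rintro _ ⟨u, -, rfl⟩ ⟨v, -, h⟩
    simpa using congrArg List.getLast? h
  rw [hb, hb, hb, setOf_isHyp_two_mul hn,
    Set.ncard_union_eq hdisj ((finite_setOf_isHyp n).image _)
      ((finite_setOf_isHyp (n - 1)).image _),
    Set.ncard_image_of_injective _ (List.append_left_injective _),
    Set.ncard_image_of_injective _ (List.append_left_injective _)]

theorem stmt1 :
    hb 1 = 1 ∧ ∀ n : ℕ, 1 ≤ n →
      hb (2 * n + 1) = hb n ∧ hb (2 * n) = hb n + hb (n - 1) :=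
  ⟨by simpa [hb_zero] using hb_two_mul_add_one 0,
    fun n hn => ⟨hb_two_mul_add_one n, hb_two_mul (by omega)⟩⟩
end

section
/- A positive integer n admits exactly one hyperbinary expansion if and only if n = 2^k − 1 for some positive integer k. -/
lemma hval_append (u v : List ℕ) :
    hval (u ++ v) = v.foldl (fun a d => 2 * a + d) (hval u) := by
  simp [hval, List.foldl_append]

lemma foldl_eq (w : List ℕ) : ∀ a : ℕ,
    w.foldl (fun a d => 2 * a + d) a = a * 2 ^ w.length + hval w := by
  induction w with
  | nil => intro a; simp [hval]
  | cons d rest ih =>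
      intro a
      have h1 : hval (d :: rest) = d * 2 ^ rest.length + hval rest := by
        have := ih d
        simpa [hval] using this
      simp only [List.foldl_cons, List.length_cons, h1]
      rw [ih (2*a+d)]
      ring

lemma hval_cons (d : ℕ) (rest : List ℕ) :
    hval (d :: rest) = d * 2 ^ rest.length + hval rest := by
  have := foldl_eq rest d
  simpa [hval] using this

lemma hval_concat (u : List ℕ) (d : ℕ) : hval (u ++ [d]) = 2 * hval u + d := by
  simp [hval_append, hval]

lemma hval_le (w : List ℕ) (h : ∀ d ∈ w, d ≤ 2) : hval w ≤ 2 ^ (w.length + 1) - 2 := by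
  induction w with
  | nil => simp [hval]
  | cons d rest ih =>
      have hd : d ≤ 2 := h d (by simp)
      have hr := ih (fun e he => h e (by simp [he]))
      rw [hval_cons]
      have h1 : d * 2 ^ rest.length ≤ 2 * 2 ^ rest.length := Nat.mul_le_mul_right _ hd
      have h2 : (2:ℕ) ^ (rest.length + 1) = 2 * 2 ^ rest.length := by ring
      have h3 : (2:ℕ) ^ (rest.length + 1 + 1) = 4 * 2 ^ rest.length := by ring
      have h4 : (1:ℕ) ≤ 2 ^ rest.length := Nat.one_le_two_pow
      simp only [List.length_cons]
      omega

lemma hval_replicate (k : ℕ) : hval (List.replicate k 1) = 2 ^ k - 1 := by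
  induction k with
  | zero => simp [hval]
  | succ k ih =>
      rw [List.replicate_succ', hval_concat, ih]
      have : (1:ℕ) ≤ 2 ^ k := Nat.one_le_two_pow
      rw [pow_succ]; omega

lemma uniq : ∀ (w : List ℕ) (k : ℕ), (∀ d ∈ w, d ≤ 2) → w.head? ≠ some 0 →
    hval w = 2 ^ k - 1 → w = List.replicate k 1 := by
  intro w
  induction w with
  | nil =>
      intro k _ _ hk
      simp [hval] at hk
      have h1 : (1:ℕ) ≤ 2 ^ k := Nat.one_le_two_pow
      have : (2:ℕ) ^ k = 1 := by omega
      have hk0 : k = 0 := by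
        by_contra hkk
        have h2 : (2:ℕ)^1 ≤ 2^k := Nat.pow_le_pow_right (by norm_num) (by omega)
        simp at h2; omega
      simp [hk0]
  | cons d rest ih =>
      intro k hdig hh hk
      have hd0 : d ≠ 0 := by simpa using hh
      have hd2 : d ≤ 2 := hdig d (by simp)
      rw [hval_cons] at hk
      set m := rest.length with hm
      have hrle : hval rest ≤ 2 ^ (m + 1) - 2 := hval_le rest (fun e he => hdig e (by simp [he]))
      have hp1 : (1:ℕ) ≤ 2 ^ m := Nat.one_le_two_pow
      have hk1 : (1:ℕ) ≤ 2 ^ k := Nat.one_le_two_pow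
      -- k ≠ 0
      have hkne : k ≠ 0 := by
        rintro rfl
        have : d * 2 ^ m ≥ 1 * 2 ^ m := Nat.mul_le_mul_right _ (by omega)
        simp at this hk
        omega
      -- m < k
      have hmk : m < k := by
        by_contra hcon
        push_neg at hcon
        have : (2:ℕ) ^ k ≤ 2 ^ m := Nat.pow_le_pow_right (by norm_num) hcon
        have hd1 : 1 * 2 ^ m ≤ d * 2 ^ m := Nat.mul_le_mul_right _ (by omega)
        omega
      have hkm2 : k < m + 2 := by
        by_contra hcon
        push_neg at hcon
        have h2 : (2:ℕ) ^ (m+2) ≤ 2 ^ k := Nat.pow_le_pow_right (by norm_num) hcon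
        have hd1 : d * 2 ^ m ≤ 2 * 2 ^ m := Nat.mul_le_mul_right _ hd2
        have e1 : (2:ℕ) ^ (m+1) = 2 * 2 ^ m := by ring
        have e2 : (2:ℕ) ^ (m+2) = 4 * 2 ^ m := by ring
        omega
      have hkm : k = m + 1 := by omega
      subst hkm
      have e1 : (2:ℕ) ^ (m+1) = 2 * 2 ^ m := by ring
      -- d = 1
      have hd1 : d = 1 := by
        rcases (by omega : d = 1 ∨ d = 2) with h | h
        · exact h
        · exfalso; subst h; omega
      subst hd1
      have hrest : hval rest = 2 ^ m - 1 := by omega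
      -- rest head ≠ 0
      have hhrest : rest.head? ≠ some 0 := by
        cases rest with
        | nil => simp
        | cons e rest' =>
            intro hcon
            simp at hcon
            subst hcon
            rw [hval_cons] at hrest
            have hle' : hval rest' ≤ 2 ^ (rest'.length + 1) - 2 :=
              hval_le rest' (fun x hx => hdig x (by simp [hx]))
            have : m = rest'.length + 1 := by simp [hm]
            have hp' : (1:ℕ) ≤ 2 ^ rest'.length := Nat.one_le_two_pow
            have : (2:ℕ) ^ m = 2 * 2 ^ rest'.length := by rw [this]; ring
            omega
      have := ih m (fun e he => hdig e (by simp [he])) hhrest hrest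
      rw [this, ← List.replicate_succ]

def binrep : ℕ → List ℕ
  | 0 => []
  | (n+1) => binrep ((n+1)/2) ++ [(n+1) % 2]
decreasing_by exact Nat.div_lt_self (Nat.succ_pos n) one_lt_two

lemma binrep_spec : ∀ n : ℕ, hval (binrep n) = n ∧ (∀ d ∈ binrep n, d ≤ 1) ∧
    (n ≠ 0 → (binrep n).head? = some 1) := by
  intro n
  induction n using Nat.strong_induction_on with
  | _ n ih =>
      match n with
      | 0 => simp [binrep, hval]
      | (n+1) =>
          have hlt : (n+1)/2 < n+1 := Nat.div_lt_self (Nat.succ_pos n) one_lt_two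
          obtain ⟨ihv, ihd, ihh⟩ := ih _ hlt
          rw [show binrep (n+1) = binrep ((n+1)/2) ++ [(n+1) % 2] from by rw [binrep]]
          refine ⟨?_, ?_, ?_⟩
          · rw [hval_concat, ihv]; omega
          · intro d hd
            rcases List.mem_append.mp hd with h | h
            · exact ihd d h
            · simp at h; omega
          · intro _
            by_cases hq : (n+1)/2 = 0
            · have hn0 : n = 0 := by omega
              subst hn0
              simp [hq, binrep]
            · have := ihh hq
              cases hb : binrep ((n+1)/2) with
              | nil => rw [hb] at this; simp at this
              | cons a l => rw [hb] at this; simpa using this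

lemma split10 : ∀ w : List ℕ, (∀ d ∈ w, d ≤ 1) → w.head? = some 1 → 0 ∈ w →
    ∃ x y : List ℕ, w = x ++ [1, 0] ++ y := by
  intro w
  induction w with
  | nil => intro _ h; simp at h
  | cons d rest ih =>
      intro hdig hh h0
      have hd1 : d = 1 := by simpa using hh
      subst hd1
      cases rest with
      | nil => simp at h0
      | cons e rest' =>
          by_cases he : e = 0
          · subst he
            exact ⟨[], rest', by simp⟩
          · have he1 : e = 1 := by
              have := hdig e (by simp)
              omega
            subst he1
            have h0' : 0 ∈ (1 :: rest' : List ℕ) := by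
              simp at h0 ⊢; exact h0
            obtain ⟨x, y, hxy⟩ := ih (fun d hd => hdig d (by simp at hd ⊢; tauto))
              (by simp) h0'
            exact ⟨1 :: x, y, by simp [hxy]⟩

lemma hval_rw_nil (y : List ℕ) : hval ([1, 0] ++ y) = hval (2 :: y) := by
  simp [hval]

lemma hval_rw (x y : List ℕ) :
    hval (x ++ [1, 0] ++ y) = hval (x ++ [0, 2] ++ y) := by
  have h1 : hval (x ++ [1,0]) = hval (x ++ [0,2]) := by
    rw [hval_append, hval_append]
    simp only [List.foldl_cons, List.foldl_nil]
    ring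
  rw [hval_append (x ++ [1,0]) y, hval_append (x ++ [0,2]) y, h1]

theorem stmt2 (n : ℕ) (hn : 0 < n) :
    (∃! w : List ℕ, IsHyp n w) ↔ ∃ k : ℕ, 1 ≤ k ∧ n = 2 ^ k - 1 := by
  constructor
  · rintro ⟨w, hw, huniq⟩
    obtain ⟨hbv, hbd, hbh⟩ := binrep_spec n
    have hhead := hbh hn.ne'
    have hbin : IsHyp n (binrep n) :=
      ⟨fun d hd => le_trans (hbd d hd) one_le_two, by rw [hhead]; simp, hbv⟩
    by_cases h0 : 0 ∈ binrep n
    · exfalso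
      obtain ⟨x, y, hxy⟩ := split10 _ hbd hhead h0
      have hdigxy : ∀ d ∈ x ++ [1, 0] ++ y, d ≤ 1 := by rw [← hxy]; exact hbd
      cases x with
      | nil =>
          have h2 : IsHyp n (2 :: y) := by
            refine ⟨?_, by simp, ?_⟩
            · intro d hd
              rcases List.mem_cons.mp hd with rfl | hd
              · exact le_refl _
              · have hmem : d ∈ ([] : List ℕ) ++ [1, 0] ++ y := by simp [hd]
                exact le_trans (hdigxy d hmem) one_le_two
            · rw [← hval_rw_nil]
              rw [show ([1,0] ++ y : List ℕ) = [] ++ [1,0] ++ y from by simp, ← hxy]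
              exact hbv
          have e1 := huniq _ hbin
          have e2 := huniq _ h2
          rw [hxy] at e1
          have heq : ([] : List ℕ) ++ [1, 0] ++ y = 2 :: y := e1.trans e2.symm
          simp at heq
      | cons a x' =>
          have hane : a ≠ 0 := by
            have hh2 : (binrep n).head? = some a := by rw [hxy]; simp
            rw [hhead] at hh2
            simp at hh2
            omega
          have h2 : IsHyp n ((a :: x') ++ [0, 2] ++ y) := by
            refine ⟨?_, by simp [hane], ?_⟩
            · intro d hd
              simp only [List.append_assoc, List.mem_append, List.mem_cons,
                List.not_mem_nil, or_false] at hd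
              rcases hd with hd | hd | hd
              · rcases hd with rfl | hd
                · exact le_trans (hdigxy d (by simp)) one_le_two
                · exact le_trans (hdigxy d (by simp [hd])) one_le_two
              · rcases hd with rfl | rfl
                · omega
                · exact le_refl _
              · exact le_trans (hdigxy d (by simp [hd])) one_le_two
            · rw [← hval_rw, ← hxy]
              exact hbv
          have e1 := huniq _ hbin
          have e2 := huniq _ h2
          rw [hxy] at e1
          have heq : (a :: x') ++ [1, 0] ++ y = (a :: x') ++ [0, 2] ++ y :=
            e1.trans e2.symm
          simp at heq
    · have hall : ∀ d ∈ binrep n, d = 1 := by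
        intro d hd
        have h1 := hbd d hd
        have h2 : d ≠ 0 := fun h => h0 (h ▸ hd)
        omega
      have hrep : binrep n = List.replicate (binrep n).length 1 :=
        List.eq_replicate_of_mem hall
      refine ⟨(binrep n).length, ?_, ?_⟩
      · cases hb : binrep n with
        | nil => rw [hb] at hhead; simp at hhead
        | cons a l => simp [hb]
      · have := hval_replicate (binrep n).length
        rw [← hrep, hbv] at this
        omega
  · rintro ⟨k, hk, rfl⟩
    refine ⟨List.replicate k 1, ⟨?_, ?_, hval_replicate k⟩,
      fun w hw => uniq w k hw.1 hw.2.1 hw.2.2⟩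
    · intro d hd
      rw [List.eq_of_mem_replicate hd]
      omega
    · rw [show k = (k - 1) + 1 from by omega, List.replicate_succ]
      simp
end

section
/- The number of distinct hyperbinary expansions of n that can be obtained from a given expansion x_1...x_k of n by a single application of one of the rewrite rules 02 → 10, 12 → 20 (leading 2 treated as 02) equals the number of maximal blocks of consecutive 2's in x_1...x_k. -/
/-- length-preserving rules only -/
def StepNL (u v : List ℕ) : Prop :=
  (∃ x y : List ℕ, u = x ++ [0, 2] ++ y ∧ v = x ++ [1, 0] ++ y) ∨
  (∃ x y : List ℕ, u = x ++ [1, 2] ++ y ∧ v = x ++ [2, 0] ++ y)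

def scount : List ℕ → ℕ
  | [] => 0
  | d :: w => scount w + (if (d = 0 ∨ d = 1) ∧ w.head? = some 2 then 1 else 0)

lemma stepNL_length {u v : List ℕ} (h : StepNL u v) : v.length = u.length := by
  rcases h with ⟨x, y, rfl, rfl⟩ | ⟨x, y, rfl, rfl⟩ <;> simp

lemma stepNL_nil (v : List ℕ) : ¬ StepNL [] v := by
  rintro (⟨x, y, h, -⟩ | ⟨x, y, h, -⟩) <;> simp at h

lemma stepNL_cons (d : ℕ) (w v : List ℕ) :
    StepNL (d :: w) v ↔ (∃ v', StepNL w v' ∧ v = d :: v') ∨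
      ((d = 0 ∨ d = 1) ∧ ∃ y, w = 2 :: y ∧ v = (d + 1) :: 0 :: y) := by
  constructor
  · rintro (⟨x, y, hu, hv⟩ | ⟨x, y, hu, hv⟩)
    · cases x with
      | nil =>
        simp only [List.nil_append, List.cons_append, List.cons.injEq] at hu
        right
        exact ⟨Or.inl hu.1, y, hu.2, by simp [hv, hu.1]⟩
      | cons a x' =>
        rw [List.cons_append, List.cons_append] at hu
        rw [List.cons.injEq] at hu
        left
        exact ⟨x' ++ [1, 0] ++ y, Or.inl ⟨x', y, hu.2, rfl⟩, by simp [hv, hu.1]⟩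
    · cases x with
      | nil =>
        simp only [List.nil_append, List.cons_append, List.cons.injEq] at hu
        right
        exact ⟨Or.inr hu.1, y, hu.2, by simp [hv, hu.1]⟩
      | cons a x' =>
        rw [List.cons_append, List.cons_append] at hu
        rw [List.cons.injEq] at hu
        left
        exact ⟨x' ++ [2, 0] ++ y, Or.inr ⟨x', y, hu.2, rfl⟩, by simp [hv, hu.1]⟩
  · rintro (⟨v', h, rfl⟩ | ⟨hd, y, rfl, rfl⟩)
    · rcases h with ⟨x, y, rfl, rfl⟩ | ⟨x, y, rfl, rfl⟩
      · exact Or.inl ⟨d :: x, y, rfl, rfl⟩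
      · exact Or.inr ⟨d :: x, y, rfl, rfl⟩
    · rcases hd with rfl | rfl
      · exact Or.inl ⟨[], y, rfl, rfl⟩
      · exact Or.inr ⟨[], y, rfl, rfl⟩

lemma stepNL_count (w : List ℕ) :
    {v | StepNL w v}.Finite ∧ {v | StepNL w v}.ncard = scount w := by
  induction w with
  | nil =>
    have h : {v | StepNL [] v} = ∅ := by
      ext v; simp [stepNL_nil]
    simp [h, scount]
  | cons d w ih =>
    have hset : {v | StepNL (d :: w) v} =
        (d :: ·) '' {v | StepNL w v} ∪
          (if (d = 0 ∨ d = 1) ∧ w.head? = some 2 then {(d + 1) :: 0 :: w.tail}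
           else (∅ : Set (List ℕ))) := by
      ext v
      simp only [Set.mem_setOf_eq, stepNL_cons, Set.mem_union, Set.mem_image]
      constructor
      · rintro (⟨v', h, rfl⟩ | ⟨hd, y, rfl, rfl⟩)
        · exact Or.inl ⟨v', h, rfl⟩
        · right
          simp [hd]
      · rintro (⟨v', h, rfl⟩ | hv)
        · exact Or.inl ⟨v', h, rfl⟩
        · right
          by_cases hc : (d = 0 ∨ d = 1) ∧ w.head? = some 2
          · simp only [if_pos hc, Set.mem_singleton_iff] at hv
            obtain ⟨hd, hh⟩ := hc
            cases w with
            | nil => simp at hh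
            | cons a w' =>
              simp only [List.head?_cons, Option.some.injEq] at hh
              exact ⟨hd, w', by rw [hh], by simpa using hv⟩
          · simp [if_neg hc] at hv
    have hinj : Function.Injective (fun v : List ℕ => d :: v) :=
      fun a b h => by simpa using h
    have hfin1 : ((d :: ·) '' {v | StepNL w v}).Finite := ih.1.image _
    have hfin2 : (if (d = 0 ∨ d = 1) ∧ w.head? = some 2 then {(d + 1) :: 0 :: w.tail}
        else (∅ : Set (List ℕ))).Finite := by
      split <;> simp
    have hdisj : Disjoint ((d :: ·) '' {v | StepNL w v})
        (if (d = 0 ∨ d = 1) ∧ w.head? = some 2 then {(d + 1) :: 0 :: w.tail}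
         else (∅ : Set (List ℕ))) := by
      rw [Set.disjoint_left]
      rintro v ⟨v', -, rfl⟩ hv
      split_ifs at hv with hc
      · simp only [Set.mem_singleton_iff, List.cons.injEq] at hv
        omega
      · exact hv
    constructor
    · rw [hset]; exact hfin1.union hfin2
    · rw [hset, Set.ncard_union_eq hdisj hfin1 hfin2,
        Set.ncard_image_of_injective _ hinj, ih.2]
      show scount w + _ = scount (d :: w)
      by_cases hc : (d = 0 ∨ d = 1) ∧ w.head? = some 2 <;>
        simp [scount, hc]

lemma blocks2_eq (w : List ℕ) (hw : ∀ d ∈ w, d ≤ 2) :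
    blocks2 w = scount w + (if w.head? = some 2 then 1 else 0) := by
  induction w with
  | nil => simp [blocks2, scount]
  | cons d rest ih =>
    have hd : d ≤ 2 := hw d (by simp)
    have ih' := ih (fun x hx => hw x (by simp [hx]))
    simp only [blocks2, scount, ih', List.head?_cons]
    by_cases hh : rest.head? = some 2 <;> interval_cases d <;> simp [hh]

theorem stmt18 (n : ℕ) (hn : 0 < n) (w : List ℕ) (hw : IsHyp n w) :
    Set.ncard {v : List ℕ | Step w v} = blocks2 w := by
  have hset : {v : List ℕ | Step w v} =
      {v | StepNL w v} ∪
        (if w.head? = some 2 then {1 :: 0 :: w.tail} else (∅ : Set (List ℕ))) := by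
    ext v
    simp only [Set.mem_setOf_eq, Step, StepNL, Set.mem_union]
    constructor
    · rintro (h | h | ⟨y, rfl, rfl⟩)
      · exact Or.inl (Or.inl h)
      · exact Or.inl (Or.inr h)
      · right; simp
    · rintro ((h | h) | hv)
      · exact Or.inl h
      · exact Or.inr (Or.inl h)
      · split_ifs at hv with hc
        · cases w with
          | nil => simp at hc
          | cons a w' =>
            simp only [List.head?_cons, Option.some.injEq] at hc
            subst hc
            simp only [Set.mem_singleton_iff] at hv
            exact Or.inr (Or.inr ⟨w', rfl, by simpa using hv⟩)
        · exact absurd hv (by simp)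
  have hNL := stepNL_count w
  have hfin2 : (if w.head? = some 2 then {1 :: 0 :: w.tail}
      else (∅ : Set (List ℕ))).Finite := by split <;> simp
  have hdisj : Disjoint {v | StepNL w v}
      (if w.head? = some 2 then {1 :: 0 :: w.tail} else (∅ : Set (List ℕ))) := by
    rw [Set.disjoint_left]
    intro v hv h2
    split_ifs at h2 with hc
    · simp only [Set.mem_singleton_iff] at h2
      have hlen := stepNL_length hv
      cases w with
      | nil => simp at hc
      | cons a w' => subst h2; simp at hlen
    · exact h2
  rw [hset, Set.ncard_union_eq hdisj hNL.1 hfin2, hNL.2,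
    blocks2_eq w hw.1]
  congr 1
  split_ifs <;> simp
end
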